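/- For every n ∈ ℕ, −β_n = a_{n+2}β_{n+1} + a_{n+4}β_{n+3} + a_{n+6}β_{n+5} + ⋯ (the series converging absolutely). -/

import Mathlib

/-!
The complete quotients `ζ k` are irrational and exceed `1` from index `1` on, and the
differences satisfy `β (k + 1) * ζ (k + 2) = -β k`. Since `ζ (k + 1) * ζ (k + 2) ≥ 2`, this
gives `|β (k + 2)| ≤ |β k| / 2`. The recurrence `β (k + 2) = a_(k+2) β (k + 1) + β k` makes the
series telescope: its terms are `β (n + 2j + 2) - β (n + 2j)`, which are geometrically small, and
its partial sums `β (n + 2N) - β n` tend to `-β n`.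
-/

open Filter Topology

theorem hasSum_sub_of_abs_le_geometric {g : ℕ → ℝ} {C r : ℝ} (hr₀ : 0 ≤ r) (hr₁ : r < 1)
    (hg : ∀ j, |g j| ≤ C * r ^ j) :
    Summable (fun j => |g (j + 1) - g j|) ∧ HasSum (fun j => g (j + 1) - g j) (-g 0) := by
  have hsummable : Summable (fun j => |g (j + 1) - g j|) := by
    refine Summable.of_nonneg_of_le (fun _ => abs_nonneg _) (fun j => ?_)
      ((summable_geometric_of_lt_one hr₀ hr₁).mul_left (C * (r + 1)))
    calc |g (j + 1) - g j| ≤ |g (j + 1)| + |g j| := abs_sub _ _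
      _ ≤ C * r ^ (j + 1) + C * r ^ j := add_le_add (hg _) (hg _)
      _ = C * (r + 1) * r ^ j := by ring
  have hlim : Tendsto g atTop (𝓝 0) := by
    have hgeom := (tendsto_pow_atTop_nhds_zero_of_lt_one hr₀ hr₁).const_mul C
    rw [mul_zero] at hgeom
    exact squeeze_zero_norm hg hgeom
  refine ⟨hsummable, (hasSum_iff_tendsto_nat_of_summable_norm
    (by simpa only [Real.norm_eq_abs] using hsummable)).2 ?_⟩
  simp_rw [Finset.sum_range_sub g]
  simpa using hlim.sub_const (g 0)

section CompleteQuotients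

variable {aCF : ℕ → ℤ} {ζ : ℕ → ℝ}

theorem irrational_complete_quotient (hζ : ∀ k, ζ k = (aCF k : ℝ) + 1 / ζ (k + 1))
    (h₀ : Irrational (ζ 0)) (k : ℕ) : Irrational (ζ k) := by
  induction k with
  | zero => exact h₀
  | succ k ih =>
    have hinv : (ζ (k + 1))⁻¹ = ζ k - aCF k := by rw [hζ k]; ring
    exact ((hinv ▸ ih.sub_intCast _ : Irrational (ζ (k + 1))⁻¹)).of_inv

theorem one_lt_complete_quotient (hfloor : ∀ k, aCF k = ⌊ζ k⌋)
    (hζ : ∀ k, ζ k = (aCF k : ℝ) + 1 / ζ (k + 1)) (h₀ : Irrational (ζ 0)) (k : ℕ) :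
    1 < ζ (k + 1) := by
  have hfract : (ζ (k + 1))⁻¹ = Int.fract (ζ k) := by
    rw [Int.fract, ← hfloor k, hζ k]; ring
  have hpos : 0 < (ζ (k + 1))⁻¹ :=
    hfract ▸ Int.fract_pos.2 ((irrational_complete_quotient hζ h₀ k).ne_int _)
  have hlt : (ζ (k + 1))⁻¹ < 1 := hfract ▸ Int.fract_lt_one _
  exact (inv_lt_one₀ (inv_pos.1 hpos)).1 hlt

theorem two_le_mul_complete_quotient (hfloor : ∀ k, aCF k = ⌊ζ k⌋)
    (hζ : ∀ k, ζ k = (aCF k : ℝ) + 1 / ζ (k + 1)) (h₀ : Irrational (ζ 0)) (k : ℕ) :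
    2 ≤ ζ (k + 1) * ζ (k + 2) := by
  have h₁ := one_lt_complete_quotient hfloor hζ h₀ k
  have h₂ := one_lt_complete_quotient hfloor hζ h₀ (k + 1)
  have ha : (1 : ℝ) ≤ aCF (k + 1) := by
    exact_mod_cast (hfloor (k + 1)).symm ▸ Int.le_floor.2 (by exact_mod_cast h₁.le)
  have hexpand : ζ (k + 1) * ζ (k + 2) = aCF (k + 1) * ζ (k + 2) + 1 := by
    rw [hζ (k + 1)]; field_simp
  nlinarith

end CompleteQuotients

section Differences

variable {A ζ β : ℕ → ℝ}

/-- `h₀` and `h₁` are the key identity and the recurrence at `k = -1`, with `β (-1) = -1`. -/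
theorem beta_mul_complete_quotient (hζ : ∀ k, ζ k = A k + 1 / ζ (k + 1))
    (hne : ∀ k, ζ (k + 1) ≠ 0) (hrec : ∀ k, β (k + 2) = A (k + 2) * β (k + 1) + β k)
    (h₀ : β 0 * ζ 1 = 1) (h₁ : β 1 = A 1 * β 0 - 1) (k : ℕ) :
    β (k + 1) * ζ (k + 2) = -β k := by
  induction k with
  | zero =>
    have hA : A 1 = ζ 1 - 1 / ζ 2 := by rw [hζ 1]; ring
    have := hne 1
    rw [h₁, hA]
    field_simp
    linear_combination ζ 2 * h₀
  | succ k ih =>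
    have hA : A (k + 2) = ζ (k + 2) - 1 / ζ (k + 3) := by rw [hζ (k + 2)]; ring
    have := hne (k + 2)
    rw [hrec, hA]
    field_simp
    linear_combination ζ (k + 3) * ih

theorem abs_beta_le_geometric (hkey : ∀ k, β (k + 1) * ζ (k + 2) = -β k)
    (hζ : ∀ k, 2 ≤ ζ (k + 1) * ζ (k + 2)) (n j : ℕ) :
    |β (n + 2 * j)| ≤ |β n| * (1 / 2) ^ j := by
  induction j with
  | zero => simp
  | succ j ih =>
    set k := n + 2 * j
    have hprod : β (k + 2) * (ζ (k + 2) * ζ (k + 3)) = β k := by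
      linear_combination ζ (k + 2) * hkey (k + 1) - hkey k
    have hstep : |β (k + 2)| * 2 ≤ |β k| := by
      have h := hζ (k + 1)
      rw [← hprod, abs_mul, abs_of_pos (by linarith : (0 : ℝ) < ζ (k + 2) * ζ (k + 3))]
      exact mul_le_mul_of_nonneg_left h (abs_nonneg _)
    rw [show n + 2 * (j + 1) = k + 2 by ring, pow_succ]
    nlinarith

end Differences

theorem neg_beta_series (a : ℝ) (ha : Irrational a)
    (aCF : ℕ → ℤ) (ζ : ℕ → ℝ)
    (hζ0 : ζ 0 = a)
    (hfloor : ∀ k, aCF k = ⌊ζ k⌋)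
    (hζ : ∀ k, ζ k = (aCF k : ℝ) + 1 / ζ (k + 1))
    (p q : ℕ → ℤ)
    (hq0 : q 0 = 1) (hq1 : q 1 = aCF 1)
    (hqrec : ∀ k, q (k + 2) = aCF (k + 2) * q (k + 1) + q k)
    (hp0 : p 0 = aCF 0) (hp1 : p 1 = aCF 1 * aCF 0 + 1)
    (hprec : ∀ k, p (k + 2) = aCF (k + 2) * p (k + 1) + p k)
    (β : ℕ → ℝ)
    (hβ : ∀ k, β k = (q k : ℝ) * a - (p k : ℝ)) (n : ℕ) :
    Summable (fun j : ℕ => |(aCF (n + 2 + 2 * j) : ℝ) * β (n + 1 + 2 * j)|) ∧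
      -β n = ∑' j : ℕ, (aCF (n + 2 + 2 * j) : ℝ) * β (n + 1 + 2 * j) := by
  have hirr : Irrational (ζ 0) := hζ0 ▸ ha
  have hne k : ζ (k + 1) ≠ 0 := (one_pos.trans (one_lt_complete_quotient hfloor hζ hirr k)).ne'
  have hrec k : β (k + 2) = aCF (k + 2) * β (k + 1) + β k := by
    simp only [hβ, hqrec, hprec]; push_cast; ring
  have h₀ : β 0 * ζ 1 = 1 := by
    have := hne 0
    rw [hβ, hq0, hp0, ← hζ0, hζ 0]; field_simp; ring
  have h₁ : β 1 = aCF 1 * β 0 - 1 := by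
    simp only [hβ, hq0, hq1, hp0, hp1]; push_cast; ring
  have hkey := beta_mul_complete_quotient hζ hne hrec h₀ h₁
  have hterm (j : ℕ) :
      (aCF (n + 2 + 2 * j) : ℝ) * β (n + 1 + 2 * j) = β (n + 2 * (j + 1)) - β (n + 2 * j) := by
    rw [show n + 2 * (j + 1) = n + 2 * j + 2 by ring, hrec,
      show n + 2 + 2 * j = n + 2 * j + 2 by ring, show n + 1 + 2 * j = n + 2 * j + 1 by ring]
    ring
  obtain ⟨hsummable, hsum⟩ := hasSum_sub_of_abs_le_geometric (g := fun j => β (n + 2 * j))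
    (by norm_num) (by norm_num)
    (abs_beta_le_geometric hkey (two_le_mul_complete_quotient hfloor hζ hirr) n)
  simp only [hterm]
  exact ⟨hsummable, hsum.tsum_eq.symm⟩
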